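/- Let A be a commutative ring with 2 invertible, B a commutative A-algebra, and C := (B ⊗_A B ⊗_A B)/(I_{01}² + I_{02}² + I_{12}²), where I_{ij} is the kernel of the map merging tensor factors i and j. Let J̃_{ij} denote the image of I_{ij} in C. Then J̃_{01} · J̃_{12} = J̃_{01} ∩ J̃_{12} = J̃_{01} · J̃_{02} = J̃_{01} ∩ J̃_{02} = J̃_{01} ∩ J̃_{02} ∩ J̃_{12}. -/

import Mathlib

/-!
`I_{ij}` is generated by the differences `b_j - b_i` of an element `b ∈ B` placed in slot `j` and in
slot `i`. Every map of index sets induces an endomorphism of `B^{⊗3}` preserving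
`K = I_{01}² + I_{02}² + I_{12}²`, hence one of `C`. Moving slot `j` into slot `i` induces an
idempotent endomorphism `p` of `C` with kernel `J̃_{ij}`, and `p` fixes the generators of `J̃_{kl}`
when `j ∉ {k, l}`. For such data `x - p x ∈ J̃_{kl} · ker p` for all `x ∈ J̃_{kl}`, so
`J̃_{kl} ∩ ker p = J̃_{kl} · ker p`; with `(k, l) = (0, 1)` and `(i, j) = (1, 2)` or `(0, 2)` both
intersections become products. Finally `J̃_{01}² = 0` and `J̃_{01} + J̃_{12} = J̃_{01} + J̃_{02}`
give `J̃_{01} J̃_{12} = J̃_{01} J̃_{02}`.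
-/

open scoped TensorProduct
open PiTensorProduct

variable (A B : Type) [CommRing A] [CommRing B] [Algebra A B]

abbrev Bpow (n : ℕ) : Type := ⨂[A] (_ : Fin n), B

noncomputable def rmap {m n : ℕ} (r : Fin m → Fin n) : Bpow A B m →ₐ[A] Bpow A B n :=
  PiTensorProduct.liftAlgHom
    ((MultilinearMap.mkPiAlgebra A (Fin m) (Bpow A B n)).compLinearMap
      (fun k => (PiTensorProduct.singleAlgHom (R := A) (A := fun _ : Fin n => B) (r k)).toLinearMap))
    (by simp [← PiTensorProduct.one_def])
    (by intro x y
        simp only [MultilinearMap.compLinearMap_apply, MultilinearMap.mkPiAlgebra_apply,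
          Pi.mul_apply, AlgHom.toLinearMap_apply, _root_.map_mul, Finset.prod_mul_distrib])

noncomputable def mergeN (n i j : ℕ) (hij : i < j) (hj : j ≤ n) :
    Bpow A B (n+1) →ₐ[A] Bpow A B n :=
  rmap A B (fun k => if h1 : k.val < j then ⟨k.val, by omega⟩
    else if h2 : k.val = j then ⟨i, by omega⟩
    else ⟨k.val - 1, by have := k.isLt; omega⟩)

noncomputable def Iideal (n i j : ℕ) (hij : i < j) (hj : j ≤ n) : Ideal (Bpow A B (n+1)) :=
  RingHom.ker (mergeN A B n i j hij hj)

noncomputable def Kideal (n : ℕ) : Ideal (Bpow A B (n+1)) :=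
  ⨆ (i : ℕ) (j : ℕ) (hij : i < j) (hj : j ≤ n), (Iideal A B n i j hij hj) ^ 2

abbrev Cq (n : ℕ) : Type := Bpow A B (n+1) ⧸ Kideal A B n

noncomputable def Jt (n i j : ℕ) (hij : i < j) (hj : j ≤ n) : Ideal (Cq A B n) :=
  Ideal.map (Ideal.Quotient.mk (Kideal A B n)) (Iideal A B n i j hij hj)

noncomputable def dElt (n i j : ℕ) (hi : i ≤ n) (hj : j ≤ n) (y : B) : Bpow A B (n+1) :=
  PiTensorProduct.singleAlgHom (R := A) (A := fun _ : Fin (n+1) => B) ⟨j, by omega⟩ y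
    - PiTensorProduct.singleAlgHom (R := A) (A := fun _ : Fin (n+1) => B) ⟨i, by omega⟩ y

noncomputable def insN (n j : ℕ) (hj : j ≤ n+1) : Bpow A B (n+1) →ₐ[A] Bpow A B (n+2) :=
  rmap A B (fun k => if h : k.val < j then ⟨k.val, by omega⟩
    else ⟨k.val + 1, by have := k.isLt; omega⟩)

noncomputable def eN (n : ℕ) : Bpow A B (n+1) →ₗ[A] Bpow A B (n+2) :=
  ∑ j : Fin (n+2), ((-1 : ℤ) ^ (j : ℕ)) • (insN A B n j (by omega)).toLinearMap

noncomputable def smashG (m n N : ℕ) (h : N = m + n) (x : Bpow A B (m+1)) (y : Bpow A B (n+1)) :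
    Bpow A B (N+1) :=
  rmap A B (fun k : Fin (m+1) => (⟨k.val, by have := k.isLt; omega⟩ : Fin (N+1))) x *
  rmap A B (fun k : Fin (n+1) => (⟨m + k.val, by have := k.isLt; omega⟩ : Fin (N+1))) y

section IdempotentEndomorphisms

variable {R : Type*} [CommRing R] (p : R →+* R)

theorem Ideal.sub_apply_mem_span_mul_ker (hp : ∀ x, p (p x) = p x) {S : Set R}
    (hS : ∀ s ∈ S, p s = s) {x : R} (hx : x ∈ Ideal.span S) :
    x - p x ∈ Ideal.span S * RingHom.ker p := by
  induction hx using Submodule.span_induction with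
  | mem s hs => simp [hS s hs]
  | zero => simp
  | add x y _ _ hx hy => simpa [add_sub_add_comm] using add_mem hx hy
  | smul a x hx hpx =>
    have hpx_mem : p x ∈ Ideal.span S := by
      simpa using sub_mem hx (Ideal.mul_le_left hpx)
    have ha : a - p a ∈ RingHom.ker p := by rw [RingHom.mem_ker, map_sub, hp, sub_self]
    have h : a * x - p (a * x) = a * (x - p x) + p x * (a - p a) := by rw [map_mul]; ring
    rw [smul_eq_mul, h]
    exact add_mem (Ideal.mul_mem_left _ _ hpx) (Ideal.mul_mem_mul hpx_mem ha)

theorem Ideal.span_inf_ker_le_mul (hp : ∀ x, p (p x) = p x) {S : Set R}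
    (hS : ∀ s ∈ S, p s = s) : Ideal.span S ⊓ RingHom.ker p ≤ Ideal.span S * RingHom.ker p := by
  rintro x ⟨hx, hpx⟩
  simpa [RingHom.mem_ker.mp hpx] using Ideal.sub_apply_mem_span_mul_ker p hp hS hx

theorem Ideal.ker_quotientMap_of_idempotent (hp : ∀ x, p (p x) = p x) (K : Ideal R)
    (hK : K ≤ K.comap p) :
    RingHom.ker (Ideal.quotientMap K p hK) = (RingHom.ker p).map (Ideal.Quotient.mk K) := by
  refine le_antisymm (fun x hx => ?_) (Ideal.map_le_iff_le_comap.mpr fun x hx => ?_)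
  · obtain ⟨x, rfl⟩ := Ideal.Quotient.mk_surjective x
    rw [RingHom.mem_ker, Ideal.quotientMap_mk, Ideal.Quotient.eq_zero_iff_mem] at hx
    have hsplit : Ideal.Quotient.mk K x = Ideal.Quotient.mk K (x - p x) := by
      rw [Ideal.Quotient.eq, sub_sub_cancel]
      exact hx
    rw [hsplit]
    exact Ideal.mem_map_of_mem _ (by rw [RingHom.mem_ker, map_sub, hp, sub_self])
  · simp [RingHom.mem_ker, Ideal.quotientMap_mk, RingHom.mem_ker.mp hx]

end IdempotentEndomorphisms

section MergeIdeals

variable {A B}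

lemma rmap_tprod {m n : ℕ} (r : Fin m → Fin n) (x : Fin m → B) :
    rmap A B r (tprod A x) = ∏ k, singleAlgHom (r k) (x k) := by
  erw [lift.tprod]
  simp

lemma rmap_single {m n : ℕ} (r : Fin m → Fin n) (k : Fin m) (y : B) :
    rmap A B r (singleAlgHom k y) = singleAlgHom (r k) y := by
  rw [singleAlgHom_apply, rmap_tprod, Finset.prod_eq_single k]
  · simp
  · intro l _ hl
    simp [Pi.mulSingle_eq_of_ne hl, ← map_one (singleAlgHom (r l))]
  · simp

lemma rmap_comp {m n p : ℕ} (s : Fin n → Fin p) (r : Fin m → Fin n) :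
    (rmap A B s).comp (rmap A B r) = rmap A B (s ∘ r) :=
  algHom_ext fun k => AlgHom.ext fun y => by
    simp only [AlgHom.comp_apply, rmap_single, Function.comp_apply]

noncomputable def collapse (n i j : ℕ) (hi : i ≤ n) (hj : j ≤ n) :
    Bpow A B (n+1) →ₐ[A] Bpow A B (n+1) :=
  rmap A B (Function.update id ⟨j, by omega⟩ ⟨i, by omega⟩)

lemma collapse_eq_comp_mergeN (n i j : ℕ) (hij : i < j) (hj : j ≤ n) :
    collapse (A := A) (B := B) n i j (by omega) hj
      = (rmap A B (Fin.succAbove ⟨j, by omega⟩)).comp (mergeN A B n i j hij hj) := by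
  rw [collapse, mergeN, rmap_comp]
  congr 1
  funext ⟨k, hk⟩
  simp only [Function.update_apply, Function.comp_apply, Fin.succAbove, Fin.ext_iff, Fin.lt_def]
  split_ifs <;> simp_all <;> omega

lemma sub_collapse_mem_span (n i j : ℕ) (hi : i ≤ n) (hj : j ≤ n) (x : Bpow A B (n+1)) :
    x - collapse n i j hi hj x ∈ Ideal.span (Set.range (dElt A B n i j hi hj)) := by
  set Q := Ideal.span (Set.range (dElt A B n i j hi hj))
  suffices h : (Ideal.Quotient.mkₐ A Q).comp (collapse n i j hi hj) = Ideal.Quotient.mkₐ A Q by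
    rw [← Ideal.Quotient.eq, ← Ideal.Quotient.mkₐ_eq_mk A, ← AlgHom.comp_apply, h]
  refine algHom_ext fun k => AlgHom.ext fun y => ?_
  simp only [AlgHom.comp_apply, collapse, rmap_single, Ideal.Quotient.mkₐ_eq_mk]
  by_cases hk : k = ⟨j, by omega⟩
  · subst hk
    rw [Function.update_self, Ideal.Quotient.eq, ← neg_sub]
    exact neg_mem (Ideal.subset_span ⟨y, rfl⟩ : dElt A B n i j hi hj y ∈ Q)
  · rw [Function.update_of_ne hk, id]

lemma mergeN_dElt (n i j : ℕ) (hij : i < j) (hj : j ≤ n) (y : B) :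
    mergeN A B n i j hij hj (dElt A B n i j (by omega) hj y) = 0 := by
  rw [dElt, map_sub, mergeN, rmap_single, rmap_single, sub_eq_zero]
  congr 2
  simp only [lt_irrefl, dite_false, dite_true, hij]

lemma Iideal_eq_span (n i j : ℕ) (hij : i < j) (hj : j ≤ n) :
    Iideal A B n i j hij hj = Ideal.span (Set.range (dElt A B n i j (by omega) hj)) := by
  refine le_antisymm (fun x hx => ?_) (Ideal.span_le.mpr ?_)
  · have hcx : collapse n i j (by omega) hj x = 0 := by
      rw [collapse_eq_comp_mergeN n i j hij hj, AlgHom.comp_apply, RingHom.mem_ker.mp hx, map_zero]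
    simpa [hcx] using sub_collapse_mem_span n i j (by omega) hj x
  · rintro _ ⟨y, rfl⟩
    exact mergeN_dElt n i j hij hj y

lemma Iideal_le_ker {S : Type*} [CommRing S] [Algebra A S] (n i j : ℕ) (hij : i < j) (hj : j ≤ n)
    (φ : Bpow A B (n+1) →ₐ[A] S)
    (hφ : ∀ y : B, φ (singleAlgHom ⟨j, by omega⟩ y) = φ (singleAlgHom ⟨i, by omega⟩ y)) :
    Iideal A B n i j hij hj ≤ RingHom.ker φ := by
  rw [Iideal_eq_span, Ideal.span_le]
  rintro _ ⟨y, rfl⟩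
  rw [SetLike.mem_coe, RingHom.mem_ker, dElt, map_sub, hφ, sub_self]

lemma ker_collapse (n i j : ℕ) (hij : i < j) (hj : j ≤ n) :
    RingHom.ker (collapse (A := A) (B := B) n i j (by omega) hj) = Iideal A B n i j hij hj := by
  refine le_antisymm (fun x hx => ?_) (Iideal_le_ker n i j hij hj _ fun y => ?_)
  · rw [Iideal_eq_span]
    simpa [RingHom.mem_ker.mp hx] using sub_collapse_mem_span n i j (by omega) hj x
  · rw [collapse, rmap_single, rmap_single, Function.update_self,
      Function.update_of_ne (by simp [hij.ne]), id]

lemma collapse_comp_self (n i j : ℕ) (hij : i < j) (hj : j ≤ n) :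
    (collapse (A := A) (B := B) n i j (by omega) hj).comp (collapse n i j (by omega) hj)
      = collapse n i j (by omega) hj := by
  rw [collapse, rmap_comp]
  congr 1
  funext k
  simp only [Function.comp_apply, Function.update_apply]
  split_ifs <;> simp_all [Fin.ext_iff]

lemma collapse_dElt (n i j k l : ℕ) (hi : i ≤ n) (hj : j ≤ n) (hk : k ≤ n) (hl : l ≤ n)
    (hkj : k ≠ j) (hlj : l ≠ j) (y : B) :
    collapse n i j hi hj (dElt A B n k l hk hl y) = dElt A B n k l hk hl y := by
  rw [collapse, dElt, map_sub, rmap_single, rmap_single, Function.update_of_ne (by simpa),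
    Function.update_of_ne (by simpa), id, id]

lemma mergeN_single_right (n i j : ℕ) (hij : i < j) (hj : j ≤ n) (y : B) :
    mergeN A B n i j hij hj (singleAlgHom (R := A) ⟨j, by omega⟩ y)
      = mergeN A B n i j hij hj (singleAlgHom (R := A) ⟨i, by omega⟩ y) :=
  sub_eq_zero.mp <| by rw [← map_sub]; exact mergeN_dElt n i j hij hj y

lemma Iideal_sq_le_Kideal (n i j : ℕ) (hij : i < j) (hj : j ≤ n) :
    Iideal A B n i j hij hj ^ 2 ≤ Kideal A B n :=
  le_iSup_of_le i <| le_iSup_of_le j <| le_iSup_of_le hij <| le_iSup_of_le hj le_rfl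

lemma map_rmap_Iideal_le (n : ℕ) (t : Fin (n+1) → Fin (n+1)) (k l : ℕ) (hkl : k < l) (hl : l ≤ n)
    (a b : ℕ) (hab : a < b) (hb : b ≤ n)
    (ht : t ⟨k, by omega⟩ = ⟨a, by omega⟩ ∧ t ⟨l, by omega⟩ = ⟨b, by omega⟩ ∨
      t ⟨k, by omega⟩ = ⟨b, by omega⟩ ∧ t ⟨l, by omega⟩ = ⟨a, by omega⟩) :
    (Iideal A B n k l hkl hl).map (rmap A B t) ≤ Iideal A B n a b hab hb := by
  rw [Ideal.map_le_iff_le_comap]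
  refine (Iideal_le_ker n k l hkl hl ((mergeN A B n a b hab hb).comp (rmap A B t)) fun y => ?_)
  simp only [AlgHom.comp_apply, rmap_single]
  rcases ht with ⟨hk, hl⟩ | ⟨hk, hl⟩ <;> rw [hk, hl, mergeN_single_right]

lemma Kideal_le_comap_rmap (n : ℕ) (t : Fin (n+1) → Fin (n+1)) :
    Kideal A B n ≤ (Kideal A B n).comap (rmap A B t) := by
  refine iSup_le fun k => iSup_le fun l => iSup_le fun hkl => iSup_le fun hl => ?_
  rw [← Ideal.map_le_iff_le_comap, Ideal.map_pow]
  have hb := fun p => Nat.lt_succ_iff.mp (t p).isLt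
  rcases lt_trichotomy (t ⟨k, by omega⟩) (t ⟨l, by omega⟩) with h | h | h
  · exact (Ideal.pow_right_mono (map_rmap_Iideal_le n t k l hkl hl _ _ h (hb _)
      (.inl ⟨rfl, rfl⟩)) 2).trans (Iideal_sq_le_Kideal n _ _ h (hb _))
  · have hbot : (Iideal A B n k l hkl hl).map (rmap A B t) = ⊥ := by
      rw [eq_bot_iff, Ideal.map_le_iff_le_comap, ← RingHom.ker_eq_comap_bot]
      exact Iideal_le_ker n k l hkl hl _ fun y => by rw [rmap_single, rmap_single, h]
    simp [hbot]
  · exact (Ideal.pow_right_mono (map_rmap_Iideal_le n t k l hkl hl _ _ h (hb _)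
      (.inr ⟨rfl, rfl⟩)) 2).trans (Iideal_sq_le_Kideal n _ _ h (hb _))

lemma Jt_eq_span (n i j : ℕ) (hij : i < j) (hj : j ≤ n) :
    Jt A B n i j hij hj
      = Ideal.span (Ideal.Quotient.mk _ '' Set.range (dElt A B n i j (by omega) hj)) := by
  rw [Jt, Iideal_eq_span, Ideal.map_span]

lemma Jt_inf_le_mul (n i j k l : ℕ) (hij : i < j) (hj : j ≤ n) (hkl : k < l) (hl : l ≤ n)
    (hkj : k ≠ j) (hlj : l ≠ j) :
    Jt A B n k l hkl hl ⊓ Jt A B n i j hij hj ≤ Jt A B n k l hkl hl * Jt A B n i j hij hj := by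
  set c := collapse (A := A) (B := B) n i j (by omega) hj
  let p := Ideal.quotientMap (Kideal A B n) c.toRingHom (Kideal_le_comap_rmap n _)
  have hc : ∀ x, c (c x) = c x := fun x => by
    rw [← AlgHom.comp_apply, collapse_comp_self n i j hij hj]
  have hp : ∀ x, p (p x) = p x := fun x => by
    obtain ⟨x, rfl⟩ := Ideal.Quotient.mk_surjective x
    simp only [p, Ideal.quotientMap_mk, AlgHom.toRingHom_eq_coe, RingHom.coe_coe, hc]
  have hker : RingHom.ker p = Jt A B n i j hij hj := by
    refine (Ideal.ker_quotientMap_of_idempotent c.toRingHom hc _ _).trans ?_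
    rw [Jt, AlgHom.toRingHom_eq_coe, RingHom.ker_coe_toRingHom, ker_collapse]
  rw [← hker, Jt_eq_span]
  refine Ideal.span_inf_ker_le_mul p hp ?_
  rintro _ ⟨_, ⟨y, rfl⟩, rfl⟩
  simp only [p, Ideal.quotientMap_mk, AlgHom.toRingHom_eq_coe, RingHom.coe_coe, c,
    collapse_dElt n i j k l _ _ _ _ hkj hlj]

lemma Jt_mul_self (n i j : ℕ) (hij : i < j) (hj : j ≤ n) :
    Jt A B n i j hij hj * Jt A B n i j hij hj = ⊥ := by
  rw [Jt, ← Ideal.map_mul, ← pow_two, eq_bot_iff, Ideal.map_le_iff_le_comap,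
    ← RingHom.ker_eq_comap_bot, Ideal.mk_ker]
  exact Iideal_sq_le_Kideal n i j hij hj

lemma Iideal_sup_eq (n i j k : ℕ) (hij : i < j) (hjk : j < k) (hk : k ≤ n) :
    Iideal A B n i j hij (by omega) ⊔ Iideal A B n j k hjk hk
      = Iideal A B n i j hij (by omega) ⊔ Iideal A B n i k (hij.trans hjk) hk := by
  simp only [Iideal_eq_span, ← Ideal.span_union]
  have hd : ∀ y, dElt A B n i k (by omega) hk y
      = dElt A B n i j (by omega) (by omega) y + dElt A B n j k (by omega) hk y := fun y => by
    simp only [dElt]; abel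
  refine le_antisymm (Ideal.span_le.mpr ?_) (Ideal.span_le.mpr ?_) <;>
    rintro _ (⟨y, rfl⟩ | ⟨y, rfl⟩)
  · exact Ideal.subset_span (.inl ⟨y, rfl⟩)
  · rw [eq_sub_of_add_eq' (hd y).symm]
    exact sub_mem (Ideal.subset_span (.inr ⟨y, rfl⟩)) (Ideal.subset_span (.inl ⟨y, rfl⟩))
  · exact Ideal.subset_span (.inl ⟨y, rfl⟩)
  · rw [hd]
    exact add_mem (Ideal.subset_span (.inl ⟨y, rfl⟩)) (Ideal.subset_span (.inr ⟨y, rfl⟩))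

lemma Jt_sup_eq (n i j k : ℕ) (hij : i < j) (hjk : j < k) (hk : k ≤ n) :
    Jt A B n i j hij (by omega) ⊔ Jt A B n j k hjk hk
      = Jt A B n i j hij (by omega) ⊔ Jt A B n i k (hij.trans hjk) hk := by
  simp only [Jt, ← Ideal.map_sup, Iideal_sup_eq]

end MergeIdeals

/-- If `2` is invertible in `A`, then in
`C = B^{⊗3}/(I_{01}² + I_{02}² + I_{12}²)` the images `J̃_{ij}` of the merge-kernels
satisfy `J̃_{01}·J̃_{12} = J̃_{01} ∩ J̃_{12} = J̃_{01}·J̃_{02} = J̃_{01} ∩ J̃_{02}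
= J̃_{01} ∩ J̃_{02} ∩ J̃_{12}`. -/
theorem statement6 :
    Jt A B 2 0 1 (by omega) (by omega) * Jt A B 2 1 2 (by omega) (by omega)
      = Jt A B 2 0 1 (by omega) (by omega) ⊓ Jt A B 2 1 2 (by omega) (by omega) ∧
    Jt A B 2 0 1 (by omega) (by omega) ⊓ Jt A B 2 1 2 (by omega) (by omega)
      = Jt A B 2 0 1 (by omega) (by omega) * Jt A B 2 0 2 (by omega) (by omega) ∧
    Jt A B 2 0 1 (by omega) (by omega) * Jt A B 2 0 2 (by omega) (by omega)
      = Jt A B 2 0 1 (by omega) (by omega) ⊓ Jt A B 2 0 2 (by omega) (by omega) ∧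
    Jt A B 2 0 1 (by omega) (by omega) ⊓ Jt A B 2 0 2 (by omega) (by omega)
      = Jt A B 2 0 1 (by omega) (by omega) ⊓ Jt A B 2 0 2 (by omega) (by omega)
          ⊓ Jt A B 2 1 2 (by omega) (by omega) := by
  set J01 := Jt A B 2 0 1 (by omega) (by omega)
  set J02 := Jt A B 2 0 2 (by omega) (by omega)
  set J12 := Jt A B 2 1 2 (by omega) (by omega)
  have e12 : J01 * J12 = J01 ⊓ J12 :=
    le_antisymm Ideal.mul_le_inf (Jt_inf_le_mul 2 1 2 0 1 (by omega) le_rfl (by omega) (by omega)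
      (by omega) (by omega))
  have e02 : J01 * J02 = J01 ⊓ J02 :=
    le_antisymm Ideal.mul_le_inf (Jt_inf_le_mul 2 0 2 0 1 (by omega) le_rfl (by omega) (by omega)
      (by omega) (by omega))
  have e : J01 * J12 = J01 * J02 := by
    calc J01 * J12 = J01 * J01 ⊔ J01 * J12 := by rw [Jt_mul_self, bot_sup_eq]
      _ = J01 * J01 ⊔ J01 * J02 := by rw [← Ideal.mul_sup, ← Ideal.mul_sup, Jt_sup_eq 2 0 1 2]
      _ = J01 * J02 := by rw [Jt_mul_self, bot_sup_eq]
  refine ⟨e12, by rw [← e12, e, e02], e02, le_antisymm (le_inf le_rfl ?_) inf_le_left⟩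
  rw [← e02, ← e]
  exact Ideal.mul_le_right
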